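/- arXiv:2503.08869 — 3 statements merged into one kernel-verified Lean document; each statement's English description precedes it below -/
import Mathlib

section
/- The proximal operator of the SCAD penalty P_{λ,γ} with γ > 2 applied at v ∈ ℝ with step size 1 is: sign(v)·max(|v|−λ, 0) if |v| ≤ 2λ; ((γ−1)v − sign(v)γλ)/(γ−2) if 2λ < |v| ≤ γλ; and v if |v| > γλ. -/
set_option maxHeartbeats 1000000

/-- The SCAD penalty with parameters `λ > 0`, `γ > 2`. -/
noncomputable def scad (lam gam t : ℝ) : ℝ :=
  if |t| ≤ lam then lam * |t|
  else if |t| ≤ gam * lam then (2 * gam * lam * |t| - t ^ 2 - lam ^ 2) / (2 * (gam - 1))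
  else lam ^ 2 * (gam + 1) / 2

/-- The proximal map (step size 1) of the SCAD penalty, in closed form. -/
noncomputable def scadProx (lam gam v : ℝ) : ℝ :=
  if |v| ≤ 2 * lam then Real.sign v * max (|v| - lam) 0
  else if |v| ≤ gam * lam then ((gam - 1) * v - Real.sign v * gam * lam) / (gam - 2)
  else v

lemma scad_neg (lam gam x : ℝ) : scad lam gam (-x) = scad lam gam x := by
  simp [scad, abs_neg, neg_sq]

lemma scadProx_neg (lam gam v : ℝ) : scadProx lam gam (-v) = - scadProx lam gam v := by
  unfold scadProx
  rw [abs_neg, Real.sign_neg]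
  split_ifs with h1 h2 <;> ring

private lemma scad_caseA (lam gam v x : ℝ) (hlam : 0 < lam) (hgam : 2 < gam) (hv0 : 0 ≤ v)
    (hv1 : v ≤ lam) (hx : x ≠ 0) :
    (1/2:ℝ) * (0 - v)^2 < scad lam gam x + (1/2) * (x - v)^2 := by
  have ha : (0:ℝ) < gam - 1 := by linarith
  have h2a : (0:ℝ) < 2 * (gam - 1) := by linarith
  have hane : (2 * (gam - 1)) ≠ 0 := ne_of_gt h2a
  unfold scad
  rcases le_or_gt 0 x with hx0 | hx0
  · have hxpos : 0 < x := lt_of_le_of_ne hx0 (Ne.symm hx)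
    rw [abs_of_nonneg hx0]
    split_ifs with hA hB
    · nlinarith
    · rw [add_comm ((2 * gam * lam * x - x ^ 2 - lam ^ 2) / (2 * (gam - 1))),
        add_div' _ _ _ hane, lt_div_iff₀ h2a]
      push_neg at hA
      nlinarith [mul_pos (sub_pos.2 hA) (show (0:ℝ) < gam - 2 by linarith),
        mul_pos (sub_pos.2 hA) (show (0:ℝ) < lam - v + lam by nlinarith)]
    · push_neg at hB
      nlinarith [mul_pos hxpos (show 0 < x - 2*v by nlinarith)]
  · rw [abs_of_neg hx0]
    split_ifs with hA hB
    · nlinarith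
    · rw [add_comm ((2 * gam * lam * -x - x ^ 2 - lam ^ 2) / (2 * (gam - 1))),
        add_div' _ _ _ hane, lt_div_iff₀ h2a]
      push_neg at hA
      nlinarith [mul_pos (show (0:ℝ) < -x - lam by linarith) (show (0:ℝ) < gam - 2 by linarith),
        mul_pos (show (0:ℝ) < -x by linarith) (show (0:ℝ) < v + lam by linarith)]
    · push_neg at hB
      nlinarith [mul_nonneg (show (0:ℝ) ≤ -x by linarith) hv0, sq_nonneg x,
        mul_pos (show (0:ℝ) < -x by linarith) (show (0:ℝ) < -x by linarith)]

private lemma scad_caseB (lam gam v x : ℝ) (hlam : 0 < lam) (hgam : 2 < gam) (hv1 : lam < v)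
    (hv2 : v ≤ 2*lam) (hx : x ≠ v - lam) :
    lam * (v - lam) + (1/2:ℝ) * ((v - lam) - v)^2 < scad lam gam x + (1/2) * (x - v)^2 := by
  have ha : (0:ℝ) < gam - 1 := by linarith
  have h2a : (0:ℝ) < 2 * (gam - 1) := by linarith
  have hane : (2 * (gam - 1)) ≠ 0 := ne_of_gt h2a
  have hxp2 : 0 < (x - (v - lam))^2 := by
    have := sub_ne_zero.2 hx; positivity
  unfold scad
  rcases le_or_gt 0 x with hx0 | hx0
  · rw [abs_of_nonneg hx0]
    split_ifs with hA hB
    · nlinarith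
    · rw [add_comm ((2 * gam * lam * x - x ^ 2 - lam ^ 2) / (2 * (gam - 1))),
        add_div' _ _ _ hane, lt_div_iff₀ h2a]
      push_neg at hA
      nlinarith [mul_pos (sub_pos.2 hA) (show (0:ℝ) < gam - 2 by linarith),
        mul_nonneg (le_of_lt (sub_pos.2 hA)) (show (0:ℝ) ≤ 2*lam - v by linarith),
        mul_nonneg (mul_nonneg (le_of_lt (sub_pos.2 hA)) (show (0:ℝ) ≤ 2*lam - v by linarith))
          (show (0:ℝ) ≤ gam - 2 by linarith)]
    · push_neg at hB
      nlinarith [mul_pos (show (0:ℝ) < x - 2*lam by nlinarith)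
        (show (0:ℝ) < x - v + lam by nlinarith)]
  · rw [abs_of_neg hx0]
    split_ifs with hA hB
    · nlinarith [mul_nonneg (show (0:ℝ) ≤ -x by linarith) (show (0:ℝ) ≤ v by linarith)]
    · rw [add_comm ((2 * gam * lam * -x - x ^ 2 - lam ^ 2) / (2 * (gam - 1))),
        add_div' _ _ _ hane, lt_div_iff₀ h2a]
      push_neg at hA
      nlinarith [mul_pos (show (0:ℝ) < -x - lam by linarith) (show (0:ℝ) < gam - 2 by linarith),
        mul_pos (show (0:ℝ) < -x by linarith) (show (0:ℝ) < v + lam by linarith)]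
    · push_neg at hB
      nlinarith [mul_nonneg (show (0:ℝ) ≤ -x by linarith) (show (0:ℝ) ≤ v by linarith),
        sq_nonneg x, mul_pos (show (0:ℝ) < -x by linarith) (show (0:ℝ) < -x by linarith)]

private lemma scad_caseC (lam gam v x p : ℝ) (hlam : 0 < lam) (hgam : 2 < gam)
    (hv1 : 2*lam < v) (hv2 : v ≤ gam*lam)
    (hp : (gam - 2) * p = (gam - 1) * v - gam * lam) (hx : x ≠ p) :
    (2 * gam * lam * p - p ^ 2 - lam ^ 2) / (2 * (gam - 1)) + (1/2:ℝ) * (p - v)^2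
      < scad lam gam x + (1/2) * (x - v)^2 := by
  have hb : (0:ℝ) < gam - 2 := by linarith
  have ha : (0:ℝ) < gam - 1 := by linarith
  have h2a : (0:ℝ) < 2 * (gam - 1) := by linarith
  have hane : (2 * (gam - 1)) ≠ 0 := ne_of_gt h2a
  have hp1 : lam < p := by nlinarith
  have hp2 : p ≤ gam * lam := by nlinarith
  have hpv : p ≤ v := by nlinarith
  have hxp2 : 0 < (x - p)^2 := by have := sub_ne_zero.2 hx; positivity
  have hpp : ((gam - 2) * p) * p = ((gam - 1) * v - gam * lam) * p := by rw [hp]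
  have hpx : ((gam - 2) * p) * x = ((gam - 1) * v - gam * lam) * x := by rw [hp]
  have hpl : ((gam - 2) * p) * lam = ((gam - 1) * v - gam * lam) * lam := by rw [hp]
  unfold scad
  rcases le_or_gt 0 x with hx0 | hx0
  · rw [abs_of_nonneg hx0]
    split_ifs with hA hB
    · rw [div_add' _ _ _ hane, div_lt_iff₀ h2a]
      nlinarith [mul_pos hb (show (0:ℝ) < (p - lam)^2 from pow_pos (by linarith) 2),
        mul_nonneg (show (0:ℝ) ≤ lam - x by linarith) (show (0:ℝ) ≤ v - 2*lam by linarith),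
        sq_nonneg (x - lam)]
    · rw [div_add' _ _ _ hane, div_add' _ _ _ hane, div_lt_div_iff₀ h2a h2a]
      nlinarith [mul_pos hb hxp2]
    · push_neg at hB
      rw [div_add' _ _ _ hane, div_lt_iff₀ h2a]
      nlinarith [mul_nonneg (le_of_lt hb) (sq_nonneg (gam*lam - p)),
        mul_pos (show (0:ℝ) < x - gam*lam by linarith)
          (show (0:ℝ) < x + gam*lam - 2*v by nlinarith),
        hpl, mul_pos (mul_pos hb hlam) (show (0:ℝ) < gam by linarith)]
  · rw [abs_of_neg hx0]
    split_ifs with hA hB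
    · rw [div_add' _ _ _ hane, div_lt_iff₀ h2a]
      nlinarith [mul_pos hb (show (0:ℝ) < (p - lam)^2 from pow_pos (by linarith) 2),
        mul_nonneg (show (0:ℝ) ≤ lam + x by linarith) (show (0:ℝ) ≤ v - 2*lam by linarith),
        sq_nonneg (x + lam),
        mul_nonneg (show (0:ℝ) ≤ -x by linarith) (show (0:ℝ) ≤ v by linarith)]
    · push_neg at hA
      rw [div_add' _ _ _ hane, div_add' _ _ _ hane, div_lt_div_iff₀ h2a h2a]
      have hid : (2 * gam * lam * -x - x ^ 2 - lam ^ 2 + 1 / 2 * (x - v) ^ 2 * (2 * (gam - 1)))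
          - (2 * gam * lam * p - p ^ 2 - lam ^ 2 + 1 / 2 * (p - v) ^ 2 * (2 * (gam - 1)))
          = (gam - 2) * (x + p)^2 + 4 * (gam - 1) * (-x) * v := by
        linear_combination (-2*(x+p)) * hp
      have hlt : (2 * gam * lam * p - p ^ 2 - lam ^ 2 + 1 / 2 * (p - v) ^ 2 * (2 * (gam - 1)))
          < (2 * gam * lam * -x - x ^ 2 - lam ^ 2 + 1 / 2 * (x - v) ^ 2 * (2 * (gam - 1))) := by
        have h1 : (0:ℝ) ≤ (gam - 2) * (x + p)^2 :=
          mul_nonneg (le_of_lt hb) (sq_nonneg (x + p))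
        have h2 : (0:ℝ) < 4 * (gam - 1) * (-x) * v := by
          have : (0:ℝ) < -x := by linarith
          have : (0:ℝ) < v := by linarith
          positivity
        linarith [hid, h1, h2]
      exact mul_lt_mul_of_pos_right hlt h2a
    · push_neg at hB
      rw [div_add' _ _ _ hane, div_lt_iff₀ h2a]
      nlinarith [mul_nonneg (le_of_lt hb) (sq_nonneg (gam*lam - p)),
        mul_pos (show (0:ℝ) < -x - gam*lam by linarith)
          (show (0:ℝ) < -x + gam*lam by nlinarith [mul_pos hb hlam]),
        mul_pos (show (0:ℝ) < -x by nlinarith [mul_pos hb hlam]) (show (0:ℝ) < v by linarith),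
        hpl, mul_pos (mul_pos hb hlam) (show (0:ℝ) < gam by linarith)]

private lemma scad_caseD (lam gam v x : ℝ) (hlam : 0 < lam) (hgam : 2 < gam)
    (hv1 : gam*lam < v) (hx : x ≠ v) :
    lam^2*(gam+1)/2 + (1/2:ℝ) * (v - v)^2 < scad lam gam x + (1/2) * (x - v)^2 := by
  have hb : (0:ℝ) < gam - 2 := by linarith
  have ha : (0:ℝ) < gam - 1 := by linarith
  have h2a : (0:ℝ) < 2 * (gam - 1) := by linarith
  have hane : (2 * (gam - 1)) ≠ 0 := ne_of_gt h2a
  have hgl : 2*lam < gam*lam := by nlinarith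
  have hxv2 : 0 < (x - v)^2 := by have := sub_ne_zero.2 hx; positivity
  unfold scad
  rcases le_or_gt 0 x with hx0 | hx0
  · rw [abs_of_nonneg hx0]
    split_ifs with hA hB
    · nlinarith [mul_nonneg (show (0:ℝ) ≤ lam - x by linarith)
        (show (0:ℝ) ≤ v - 2*lam by linarith),
        mul_pos (show (0:ℝ) < v - gam*lam by linarith)
          (show (0:ℝ) < v + gam*lam - 2*lam by nlinarith),
        mul_pos (mul_pos hb hlam) (mul_pos ha hlam)]
    · rw [add_comm ((2 * gam * lam * x - x ^ 2 - lam ^ 2) / (2 * (gam - 1))),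
        add_div' _ _ _ hane, lt_div_iff₀ h2a]
      push_neg at hA
      nlinarith [mul_nonneg (show (0:ℝ) ≤ gam*lam - x by linarith)
        (show (0:ℝ) ≤ v - gam*lam by linarith),
        mul_nonneg (le_of_lt hb) (sq_nonneg (x - gam*lam)),
        mul_nonneg (mul_nonneg (le_of_lt ha) (show (0:ℝ) ≤ v - gam*lam by linarith))
          (show (0:ℝ) ≤ gam*lam - x by linarith),
        mul_pos (show (0:ℝ) < v - gam*lam by linarith)
          (show (0:ℝ) < v - gam*lam by linarith),
        mul_pos (show (0:ℝ) < v - gam*lam by linarith) ha]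
    · nlinarith
  · rw [abs_of_neg hx0]
    split_ifs with hA hB
    · nlinarith [mul_nonneg (show (0:ℝ) ≤ -x by linarith) (show (0:ℝ) ≤ v by nlinarith),
        mul_pos (show (0:ℝ) < v - gam*lam by linarith)
          (show (0:ℝ) < v + gam*lam - 2*lam by nlinarith),
        mul_pos (mul_pos hb hlam) (mul_pos ha hlam)]
    · rw [add_comm ((2 * gam * lam * -x - x ^ 2 - lam ^ 2) / (2 * (gam - 1))),
        add_div' _ _ _ hane, lt_div_iff₀ h2a]
      push_neg at hA
      nlinarith [mul_nonneg (show (0:ℝ) ≤ -x by linarith) (show (0:ℝ) ≤ v by nlinarith),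
        mul_nonneg (le_of_lt hb) (sq_nonneg (x + gam*lam)),
        mul_pos (show (0:ℝ) < v - gam*lam by linarith) ha,
        mul_pos (mul_pos ha (show (0:ℝ) < -x by linarith)) (show (0:ℝ) < v by nlinarith)]
    · nlinarith

private lemma scad_key_nonneg (lam gam v : ℝ) (hlam : 0 < lam) (hgam : 2 < gam) (hv : 0 ≤ v)
    (x : ℝ) (hx : x ≠ scadProx lam gam v) :
    scad lam gam (scadProx lam gam v) + (1/2:ℝ) * (scadProx lam gam v - v)^2
      < scad lam gam x + (1/2) * (x - v)^2 := by
  have hb : (0:ℝ) < gam - 2 := by linarith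
  have hvabs : |v| = v := abs_of_nonneg hv
  by_cases h1 : v ≤ 2*lam
  · have hple : |v| ≤ 2*lam := by rw [hvabs]; exact h1
    by_cases h2 : v ≤ lam
    · have hp : scadProx lam gam v = 0 := by
        unfold scadProx
        rw [if_pos hple, hvabs, max_eq_right (by linarith), mul_zero]
      rw [hp] at hx ⊢
      have h0 : scad lam gam 0 = 0 := by
        unfold scad; rw [abs_zero, if_pos hlam.le, mul_zero]
      rw [h0, zero_add]
      exact scad_caseA lam gam v x hlam hgam hv h2 hx
    · push_neg at h2
      have hvpos : 0 < v := lt_trans hlam h2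
      have hp : scadProx lam gam v = v - lam := by
        unfold scadProx
        rw [if_pos hple, hvabs, Real.sign_of_pos hvpos, max_eq_left (by linarith), one_mul]
      rw [hp] at hx ⊢
      have hsp : scad lam gam (v - lam) = lam * (v - lam) := by
        unfold scad
        rw [abs_of_nonneg (by linarith), if_pos (by linarith)]
      rw [hsp]
      exact scad_caseB lam gam v x hlam hgam h2 h1 hx
  · push_neg at h1
    have hvpos : 0 < v := by linarith
    have hn1 : ¬ |v| ≤ 2*lam := by rw [hvabs]; linarith
    by_cases h3 : v ≤ gam*lam
    · set p := ((gam-1)*v - gam*lam)/(gam-2) with hpdef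
      have hpe : (gam-2)*p = (gam-1)*v - gam*lam := by
        rw [hpdef, mul_comm, div_mul_cancel₀ _ (ne_of_gt hb)]
      have hp : scadProx lam gam v = p := by
        unfold scadProx
        rw [if_neg hn1, if_pos (by rw [hvabs]; exact h3), Real.sign_of_pos hvpos, one_mul]
      have hp1 : lam < p := by nlinarith
      have hp0 : (0:ℝ) ≤ p := by linarith
      have hp2 : p ≤ gam*lam := by nlinarith
      rw [hp] at hx ⊢
      have hsp : scad lam gam p = (2*gam*lam*p - p^2 - lam^2)/(2*(gam-1)) := by
        unfold scad
        rw [abs_of_nonneg hp0, if_neg (by push_neg; exact hp1), if_pos hp2]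
      rw [hsp]
      exact scad_caseC lam gam v x p hlam hgam h1 h3 hpe hx
    · push_neg at h3
      have hn3 : ¬ |v| ≤ gam*lam := by rw [hvabs]; linarith
      have hp : scadProx lam gam v = v := by
        unfold scadProx
        rw [if_neg hn1, if_neg hn3]
      rw [hp] at hx ⊢
      have hsp : scad lam gam v = lam^2*(gam+1)/2 := by
        unfold scad
        rw [hvabs, if_neg (by push_neg; nlinarith), if_neg (by push_neg; exact h3)]
      rw [hsp]
      exact scad_caseD lam gam v x hlam hgam h3 hx

private lemma scad_key (lam gam v : ℝ) (hlam : 0 < lam) (hgam : 2 < gam)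
    (x : ℝ) (hx : x ≠ scadProx lam gam v) :
    scad lam gam (scadProx lam gam v) + (1/2:ℝ) * (scadProx lam gam v - v)^2
      < scad lam gam x + (1/2) * (x - v)^2 := by
  rcases le_or_gt 0 v with hv | hv
  · exact scad_key_nonneg lam gam v hlam hgam hv x hx
  · have hx' : -x ≠ scadProx lam gam (-v) := by
      rw [scadProx_neg]
      intro h
      exact hx (neg_inj.mp h)
    have h := scad_key_nonneg lam gam (-v) hlam hgam (by linarith) (-x) hx'
    rw [scadProx_neg, scad_neg, scad_neg] at h
    have e1 : (-scadProx lam gam v - -v)^2 = (scadProx lam gam v - v)^2 := by ring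
    have e2 : (-x - -v)^2 = (x - v)^2 := by ring
    rw [e1, e2] at h
    exact h

/-- The proximal operator of the SCAD penalty `P_{λ,γ}` with `γ > 2` at `v ∈ ℝ`
(step size `1`) is given in closed form by `scadProx`: it is the unique minimizer of
`x ↦ P_{λ,γ}(x) + (1/2)(x − v)²`. -/
theorem scad_prox_closed_form (lam gam v : ℝ) (hlam : 0 < lam) (hgam : 2 < gam) :
    IsMinOn (fun x => scad lam gam x + (1 / 2) * (x - v) ^ 2) Set.univ
      (scadProx lam gam v) ∧
    ∀ x, IsMinOn (fun x => scad lam gam x + (1 / 2) * (x - v) ^ 2) Set.univ x →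
      x = scadProx lam gam v := by
  constructor
  · apply isMinOn_iff.mpr
    intro x _
    rcases eq_or_ne x (scadProx lam gam v) with h | h
    · rw [h]
    · exact le_of_lt (scad_key lam gam v hlam hgam x h)
  · intro x hmin
    by_contra hne
    have h1 := scad_key lam gam v hlam hgam x hne
    have h2 := isMinOn_iff.mp hmin (scadProx lam gam v) (Set.mem_univ _)
    linarith
end

section
/- If x* minimizes F(w₀, w₁,…,w_L, {w_l^j}) = ∑_l ∑_j f_{lj}(w_l^j) + ∑_l ∑_j ω‖w_l^j − w_l‖₁ + ∑_l ω₀‖w_l − w₀‖₁, where each f_{lj} is convex and ν_f-Lipschitz, ω > ν_f, and ω₀ > max_l N_l·ν_f, then at any minimizer all variables coincide: w_l^j = w_l = w₀ for all l, j, and w₀ minimizes ∑_l ∑_j f_{lj}. -/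
open Finset

private lemma norm_le_l1 {n : ℕ} (x : EuclideanSpace ℝ (Fin n)) :
    ‖x‖ ≤ ∑ i, |x i| := by
  rw [EuclideanSpace.norm_eq]
  have h : ∑ i, ‖x i‖^2 ≤ (∑ i, ‖x i‖)^2 :=
    Finset.sum_sq_le_sq_sum_of_nonneg (fun i _ => norm_nonneg _)
  calc Real.sqrt (∑ i, ‖x i‖^2) ≤ Real.sqrt ((∑ i, ‖x i‖)^2) := Real.sqrt_le_sqrt h
    _ = ∑ i, ‖x i‖ := Real.sqrt_sq (Finset.sum_nonneg fun i _ => norm_nonneg _)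
    _ = ∑ i, |x i| := by simp [Real.norm_eq_abs]

/-- Exact-penalty hierarchical consensus: if `(w₀, w, wc)` minimizes
`∑_l ∑_j f_{lj}(w_l^j) + ∑_l ∑_j ω‖w_l^j − w_l‖₁ + ∑_l ω₀‖w_l − w₀‖₁`,
where each `f_{lj}` is convex and `ν_f`-Lipschitz, `ω > ν_f` and
`ω₀ > max_l N_l · ν_f`, then all variables coincide, `w_l^j = w_l = w₀`,
and `w₀` minimizes `∑_l ∑_j f_{lj}`. -/
theorem hierarchical_exact_penalty_consensus (n L : ℕ) (N : Fin L → ℕ)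
    (f : (l : Fin L) → Fin (N l) → EuclideanSpace ℝ (Fin n) → ℝ)
    (νf ω ω₀ : ℝ) (hνf : 0 ≤ νf)
    (hconv : ∀ l j, ConvexOn ℝ Set.univ (f l j))
    (hlip : ∀ l j, ∀ x y, |f l j x - f l j y| ≤ νf * ‖x - y‖)
    (hω : νf < ω) (hω₀ : ∀ l : Fin L, (N l : ℝ) * νf < ω₀)
    (w₀ : EuclideanSpace ℝ (Fin n))
    (w : Fin L → EuclideanSpace ℝ (Fin n))
    (wc : (l : Fin L) → Fin (N l) → EuclideanSpace ℝ (Fin n))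
    (hmin : IsMinOn
      (fun p : EuclideanSpace ℝ (Fin n) × (Fin L → EuclideanSpace ℝ (Fin n)) ×
          ((l : Fin L) → Fin (N l) → EuclideanSpace ℝ (Fin n)) =>
        (∑ l, ∑ j, f l j (p.2.2 l j)) +
        (∑ l, ∑ j, ω * ∑ i, |p.2.2 l j i - p.2.1 l i|) +
        (∑ l, ω₀ * ∑ i, |p.2.1 l i - p.1 i|))
      Set.univ (w₀, w, wc)) :
    (∀ l j, wc l j = w l) ∧ (∀ l, w l = w₀) ∧
    IsMinOn (fun v => ∑ l, ∑ j, f l j v) Set.univ w₀ := by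
  have key := isMinOn_iff.mp hmin
  -- Lipschitz bound in the ℓ¹ norm
  have lipl1 : ∀ l j (x y : EuclideanSpace ℝ (Fin n)),
      f l j x - f l j y ≤ νf * ∑ i, |x i - y i| := by
    intro l j x y
    have h1 := (abs_le.mp (hlip l j x y)).2
    have h2 : ‖x - y‖ ≤ ∑ i, |x i - y i| := by
      simpa using norm_le_l1 (x - y)
    nlinarith [mul_le_mul_of_nonneg_left h2 hνf]
  set S : (l : Fin L) → Fin (N l) → ℝ := fun l j => ∑ i, |wc l j i - w l i| with hSdef
  have hSnn : ∀ l j, 0 ≤ S l j := fun l j =>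
    Finset.sum_nonneg fun i _ => abs_nonneg _
  -- Step 1: wc l j = w l
  have h1 := key (w₀, w, fun l _ => w l) (Set.mem_univ _)
  simp only [sub_self, abs_zero, Finset.sum_const_zero, mul_zero, add_zero] at h1
  have hf1 : ∑ l, ∑ j, (f l j (w l) - f l j (wc l j)) ≤ ∑ l, ∑ j, νf * S l j := by
    refine Finset.sum_le_sum fun l _ => Finset.sum_le_sum fun j _ => ?_
    refine (lipl1 l j (w l) (wc l j)).trans_eq ?_
    congr 1
    exact Finset.sum_congr rfl fun i _ => abs_sub_comm _ _
  have hsum1 : ∑ l, ∑ j, (ω - νf) * S l j ≤ 0 := by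
    have e1 : ∑ l, ∑ j, (ω - νf) * S l j
        = ∑ l, ∑ j, ω * S l j - ∑ l, ∑ j, νf * S l j := by
      rw [← Finset.sum_sub_distrib]
      congr 1; funext l
      rw [← Finset.sum_sub_distrib]
      congr 1; funext j; ring
    have e2 : ∑ l, ∑ j, (f l j (w l) - f l j (wc l j))
        = ∑ l, ∑ j, f l j (w l) - ∑ l, ∑ j, f l j (wc l j) := by
      rw [← Finset.sum_sub_distrib]
      congr 1; funext l
      rw [← Finset.sum_sub_distrib]
    rw [e1]
    rw [e2] at hf1
    linarith
  have hS0 : ∀ l j, S l j = 0 := by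
    have hnn : ∀ l ∈ Finset.univ, (0:ℝ) ≤ ∑ j, (ω - νf) * S l j := fun l _ =>
      Finset.sum_nonneg fun j _ => mul_nonneg (by linarith) (hSnn l j)
    have htot : ∑ l, ∑ j, (ω - νf) * S l j = 0 :=
      le_antisymm hsum1 (Finset.sum_nonneg hnn)
    intro l j
    have hl := (Finset.sum_eq_zero_iff_of_nonneg hnn).mp htot l (Finset.mem_univ l)
    have hj := (Finset.sum_eq_zero_iff_of_nonneg
      (fun j _ => mul_nonneg (by linarith : (0:ℝ) ≤ ω - νf) (hSnn l j))).mp hl j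
      (Finset.mem_univ j)
    have : ω - νf ≠ 0 := by linarith
    exact (mul_eq_zero.mp hj).resolve_left this
  have hwc : ∀ l j, wc l j = w l := by
    intro l j
    ext i
    have := (Finset.sum_eq_zero_iff_of_nonneg
      (fun i _ => abs_nonneg (wc l j i - w l i))).mp (hS0 l j) i (Finset.mem_univ i)
    have := abs_eq_zero.mp this
    linarith
  -- Step 2: w l = w₀
  set T : Fin L → ℝ := fun l => ∑ i, |w l i - w₀ i| with hTdef
  have hTnn : ∀ l, 0 ≤ T l := fun l => Finset.sum_nonneg fun i _ => abs_nonneg _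
  have h2 := key (w₀, fun _ => w₀, fun _ _ => w₀) (Set.mem_univ _)
  simp only [sub_self, abs_zero, Finset.sum_const_zero, mul_zero, add_zero,
    Finset.sum_const, smul_zero] at h2
  -- rewrite wc in h2
  have hwcval : ∀ l j, f l j (wc l j) = f l j (w l) := fun l j => by rw [hwc l j]
  have hsum2 : ∑ l, (ω₀ - (N l : ℝ) * νf) * T l ≤ 0 := by
    have hf2 : ∀ l, ∑ j, (f l j w₀ - f l j (w l)) ≤ (N l : ℝ) * νf * T l := by
      intro l
      calc ∑ j, (f l j w₀ - f l j (w l)) ≤ ∑ j : Fin (N l), νf * T l :=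
            Finset.sum_le_sum fun j _ => lipl1 l j w₀ (w l) |>.trans (by
              have : (∑ i, |w₀ i - w l i|) = T l := by
                simp only [hTdef]
                congr 1; funext i; rw [abs_sub_comm]
              rw [this])
        _ = (N l : ℝ) * (νf * T l) := by simp [Finset.sum_const, mul_comm]
        _ = (N l : ℝ) * νf * T l := by ring
    have hS0' : ∀ l j, (∑ i, |wc l j i - w l i|) = 0 := hS0
    -- original objective value with wc = w l
    have h2' : (∑ l, ∑ j, f l j (w l)) + (∑ l, ω₀ * T l) ≤ ∑ l, ∑ j, f l j w₀ := by
      have e : (∑ l, ∑ j, f l j (wc l j)) = ∑ l, ∑ j, f l j (w l) := by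
        exact Finset.sum_congr rfl fun l _ => Finset.sum_congr rfl fun j _ => hwcval l j
      have e2 : (∑ l, ∑ j, ω * ∑ i, |wc l j i - w l i|) = 0 := by
        apply Finset.sum_eq_zero; intro l _
        apply Finset.sum_eq_zero; intro j _
        have h0 : (∑ i, |wc l j i - w l i|) = 0 := hS0' l j
        rw [h0, mul_zero]
      rw [e, e2] at h2
      linarith
    have e3 : ∑ l, (ω₀ - (N l : ℝ) * νf) * T l
        = ∑ l, ω₀ * T l - ∑ l, (N l : ℝ) * νf * T l := by
      rw [← Finset.sum_sub_distrib]
      congr 1; funext l; ring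
    have e4 : ∑ l, ∑ j, (f l j w₀ - f l j (w l))
        = ∑ l, ∑ j, f l j w₀ - ∑ l, ∑ j, f l j (w l) := by
      rw [← Finset.sum_sub_distrib]
      congr 1; funext l
      rw [← Finset.sum_sub_distrib]
    have hf2' : ∑ l, ∑ j, (f l j w₀ - f l j (w l)) ≤ ∑ l, (N l : ℝ) * νf * T l :=
      Finset.sum_le_sum fun l _ => hf2 l
    rw [e4] at hf2'
    rw [e3]
    linarith
  have hT0 : ∀ l, T l = 0 := by
    have hnn : ∀ l ∈ Finset.univ, (0:ℝ) ≤ (ω₀ - (N l : ℝ) * νf) * T l := fun l _ =>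
      mul_nonneg (by linarith [hω₀ l]) (hTnn l)
    have htot : ∑ l, (ω₀ - (N l : ℝ) * νf) * T l = 0 :=
      le_antisymm hsum2 (Finset.sum_nonneg hnn)
    intro l
    have hl := (Finset.sum_eq_zero_iff_of_nonneg hnn).mp htot l (Finset.mem_univ l)
    have : ω₀ - (N l : ℝ) * νf ≠ 0 := by have := hω₀ l; linarith
    exact (mul_eq_zero.mp hl).resolve_left this
  have hwl : ∀ l, w l = w₀ := by
    intro l
    ext i
    have := (Finset.sum_eq_zero_iff_of_nonneg
      (fun i _ => abs_nonneg (w l i - w₀ i))).mp (hT0 l) i (Finset.mem_univ i)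
    have := abs_eq_zero.mp this
    linarith
  refine ⟨hwc, hwl, ?_⟩
  -- Step 3: w₀ minimizes the sum
  rw [isMinOn_iff]
  intro v _
  have h3 := key (v, fun _ => v, fun _ _ => v) (Set.mem_univ _)
  simp only [sub_self, abs_zero, Finset.sum_const_zero, mul_zero, add_zero] at h3
  have e : (∑ l, ∑ j, f l j (wc l j)) = ∑ l, ∑ j, f l j w₀ :=
    Finset.sum_congr rfl fun l _ => Finset.sum_congr rfl fun j _ => by
      rw [hwc l j, hwl l]
  rw [e] at h3
  have epen : (∑ l, ∑ j, ω * ∑ i, |wc l j i - w l i|)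
      + (∑ l, ω₀ * ∑ i, |w l i - w₀ i|) = 0 := by
    have e1 : (∑ l, ∑ j, ω * ∑ i, |wc l j i - w l i|) = 0 := by
      apply Finset.sum_eq_zero; intro l _
      apply Finset.sum_eq_zero; intro j _
      have h0 : (∑ i, |wc l j i - w l i|) = 0 := hS0 l j
      rw [h0, mul_zero]
    have e2 : (∑ l, ω₀ * ∑ i, |w l i - w₀ i|) = 0 := by
      apply Finset.sum_eq_zero; intro l _
      have h0 : (∑ i, |w l i - w₀ i|) = 0 := hT0 l
      rw [h0, mul_zero]
    rw [e1, e2, add_zero]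
  linarith
end

section
/- The robust phase retrieval loss w ↦ |y − |⟨x, w⟩|²| is ρ-weakly convex on any bounded set {‖w‖ ≤ R} with ρ = 2‖x‖², i.e., w ↦ |y − ⟨x,w⟩²| + ‖x‖²‖w‖² is convex on ℝ^M. -/
open RealInnerProductSpace

/-- A quadratic form `w ↦ s‖w‖² + t⟪x,w⟫²` that is pointwise nonnegative is convex. -/
lemma quad_convex (M : ℕ) (x : EuclideanSpace ℝ (Fin M)) (s t : ℝ)
    (hq : ∀ w : EuclideanSpace ℝ (Fin M), 0 ≤ s * ‖w‖ ^ 2 + t * (inner ℝ x w : ℝ) ^ 2) :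
    ConvexOn ℝ Set.univ
      (fun w : EuclideanSpace ℝ (Fin M) => s * ‖w‖ ^ 2 + t * (inner ℝ x w : ℝ) ^ 2) := by
  refine ⟨convex_univ, ?_⟩
  intro w _ v _ a b ha hb hab
  simp only [smul_eq_mul]
  have hip : (inner ℝ x (a • w + b • v) : ℝ) = a * (inner ℝ x w : ℝ) + b * (inner ℝ x v : ℝ) := by
    rw [inner_add_right, real_inner_smul_right, real_inner_smul_right]
  have hn : ‖a • w + b • v‖ ^ 2 =
      a ^ 2 * ‖w‖ ^ 2 + 2 * a * b * (inner ℝ w v : ℝ) + b ^ 2 * ‖v‖ ^ 2 := by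
    rw [← real_inner_self_eq_norm_sq]
    simp only [inner_add_left, inner_add_right, real_inner_smul_left, real_inner_smul_right]
    rw [real_inner_self_eq_norm_sq w, real_inner_self_eq_norm_sq v, real_inner_comm v w]
    ring
  have hd := hq (w - v)
  have hnd : ‖w - v‖ ^ 2 = ‖w‖ ^ 2 - 2 * (inner ℝ w v : ℝ) + ‖v‖ ^ 2 := by
    rw [← real_inner_self_eq_norm_sq]
    simp only [inner_sub_left, inner_sub_right]
    rw [real_inner_self_eq_norm_sq w, real_inner_self_eq_norm_sq v, real_inner_comm v w]
    ring
  have hid : (inner ℝ x (w - v) : ℝ) = (inner ℝ x w : ℝ) - (inner ℝ x v : ℝ) := by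
    simp [inner_sub_right]
  rw [hnd, hid] at hd
  rw [hip, hn]
  have hb' : b = 1 - a := by linarith
  subst hb'
  nlinarith [mul_nonneg (mul_nonneg ha hb) hd]

/-- The robust phase retrieval loss `w ↦ |y − ⟨x, w⟩²|` is `ρ`-weakly convex with
`ρ = 2‖x‖²`: the function `w ↦ |y − ⟨x, w⟩²| + ‖x‖²‖w‖²` is convex on `ℝ^M`. -/
theorem phase_retrieval_weakly_convex (M : ℕ) (x : EuclideanSpace ℝ (Fin M)) (y : ℝ) :
    ConvexOn ℝ Set.univ
      (fun w : EuclideanSpace ℝ (Fin M) =>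
        |y - (inner ℝ x w : ℝ) ^ 2| + ‖x‖ ^ 2 * ‖w‖ ^ 2) := by
  have h1 : ConvexOn ℝ Set.univ
      (fun w : EuclideanSpace ℝ (Fin M) =>
        y + (‖x‖ ^ 2 * ‖w‖ ^ 2 + (-1) * (inner ℝ x w : ℝ) ^ 2)) := by
    refine (convexOn_const y convex_univ).add (quad_convex M x _ _ ?_)
    intro w
    have := real_inner_mul_inner_self_le x w
    rw [real_inner_self_eq_norm_sq x, real_inner_self_eq_norm_sq w] at this
    nlinarith
  have h2 : ConvexOn ℝ Set.univ
      (fun w : EuclideanSpace ℝ (Fin M) =>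
        -y + (‖x‖ ^ 2 * ‖w‖ ^ 2 + 1 * (inner ℝ x w : ℝ) ^ 2)) := by
    refine (convexOn_const (-y) convex_univ).add (quad_convex M x _ _ ?_)
    intro w
    positivity
  have key := h1.sup h2
  refine key.congr ?_
  intro w _
  symm
  simp only [Pi.sup_apply]
  rw [abs_eq_max_neg, ← max_add_add_right]
  congr 1 <;> ring
end
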